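/- Let T be an NBC spanning tree of G with IN(T) ≠ ∅. Then there exists e ∈ IN(T) such that, setting f := min cut(T,e) and letting T' be the spanning tree with edge set (E(T) \ {e}) ∪ {f}, the tree T' is an NBC spanning tree with |IN(T')| = |IN(T)| − 1; moreover f is internally active in T', f is the maximal internally active edge of T' lying in cyc(T',e), and (E(T') ∪ {e}) \ {f} = E(T). -/

import Mathlib

open SimpleGraph

variable {V : Type*}

attribute [-instance] Sym2.instPartialOrder

/-- `T` is a spanning tree of `G`: a subgraph of `G` (on the same vertex set) that is a tree. -/
def IsSpanningTree (G T : SimpleGraph V) : Prop :=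
  T ≤ G ∧ T.IsTree

/-- `cutset G T e`: the set of edges of `G` whose endpoints lie in the two different
components of `T` with the edge `e` deleted. -/
def cutset (G T : SimpleGraph V) (e : Sym2 V) : Set (Sym2 V) :=
  {f | f ∈ G.edgeSet ∧ ∀ u v : V, f = s(u, v) → ¬ (T.deleteEdges {e}).Reachable u v}

/-- `cycset T f`: the edge set of the unique cycle of `T` with the edge `f` added
(an edge of the unicyclic connected graph `T + f` lies on the cycle iff deleting it
keeps the graph connected). -/
def cycset (T : SimpleGraph V) (f : Sym2 V) : Set (Sym2 V) :=
  {e | e ∈ (T ⊔ fromEdgeSet {f}).edgeSet ∧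
    ((T ⊔ fromEdgeSet {f}).deleteEdges {e}).Connected}

/-- An edge `e` of `T` is internally active if it is the minimum of `cutset G T e`. -/
def InternallyActive [LinearOrder (Sym2 V)] (G T : SimpleGraph V) (e : Sym2 V) : Prop :=
  e ∈ T.edgeSet ∧ ∀ f ∈ cutset G T e, e ≤ f

/-- `IN G T`: the set of internally inactive edges of `T`. -/
def IN [LinearOrder (Sym2 V)] (G T : SimpleGraph V) : Set (Sym2 V) :=
  {e | e ∈ T.edgeSet ∧ ¬ InternallyActive G T e}

/-- `C` is the edge set of some cycle of `G`. -/
def IsCycleEdgeSet (G : SimpleGraph V) (C : Set (Sym2 V)) : Prop :=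
  ∃ (v : V) (w : G.Walk v v), w.IsCycle ∧ C = {e | e ∈ w.edges}

/-- A broken circuit: the edge set of a cycle with its minimum edge removed. -/
def IsBrokenCircuit [LinearOrder (Sym2 V)] (G : SimpleGraph V) (B : Set (Sym2 V)) : Prop :=
  ∃ (C : Set (Sym2 V)) (e : Sym2 V),
    IsCycleEdgeSet G C ∧ e ∈ C ∧ (∀ f ∈ C, e ≤ f) ∧ B = C \ {e}

/-- A set of edges is NBC if it contains no broken circuit. -/
def IsNBC [LinearOrder (Sym2 V)] (G : SimpleGraph V) (S : Set (Sym2 V)) : Prop :=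
  ∀ B : Set (Sym2 V), IsBrokenCircuit G B → ¬ B ⊆ S

/-- `T` is an NBC spanning tree of `G`. -/
def IsNBCSpanningTree [LinearOrder (Sym2 V)] (G T : SimpleGraph V) : Prop :=
  IsSpanningTree G T ∧ IsNBC G T.edgeSet

/-- The edge set of `T` written as a list in increasing order. -/
noncomputable def edgeList [Fintype V] [LinearOrder (Sym2 V)] (T : SimpleGraph V) :
    List (Sym2 V) :=
  (Set.toFinite T.edgeSet).toFinset.sort (· ≤ ·)

/-- Lexicographic order on spanning trees via their sorted edge lists. -/
def treeLexLT [Fintype V] [LinearOrder (Sym2 V)] (T T' : SimpleGraph V) : Prop :=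
  List.Lex (· < ·) (edgeList T) (edgeList T')

namespace NBCAux

variable {V : Type*}

lemma reach_of_walk_avoid {T : SimpleGraph V} {u v : V} (w : T.Walk u v)
    {s : Set (Sym2 V)} (h : ∀ h' ∈ w.edges, h' ∉ s) : (T.deleteEdges s).Reachable u v :=
  ⟨w.transfer _ (fun e' he' => by
    rw [edgeSet_deleteEdges]
    exact ⟨w.edges_subset_edgeSet he', h e' he'⟩)⟩

lemma reach_del_mono {T : SimpleGraph V} {u v : V} {s t : Set (Sym2 V)} (hst : s ⊆ t)
    (h : (T.deleteEdges t).Reachable u v) : (T.deleteEdges s).Reachable u v :=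
  h.mono (deleteEdges_anti hst)

lemma reach_sup_edge_iff {H : SimpleGraph V} {x y : V} (hxy : x ≠ y) (u v : V) :
    (H ⊔ fromEdgeSet {s(x,y)}).Reachable u v ↔
      H.Reachable u v ∨ (H.Reachable u x ∧ H.Reachable y v) ∨
        (H.Reachable u y ∧ H.Reachable x v) := by
  constructor
  · rintro ⟨w⟩
    induction w with
    | nil => exact Or.inl (Reachable.refl _)
    | @cons a c d hadj p ih =>
      rcases (sup_adj _ _ _ _).mp hadj with hH | hE
      · rcases ih with h | ⟨h1, h2⟩ | ⟨h1, h2⟩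
        · exact Or.inl (hH.reachable.trans h)
        · exact Or.inr (Or.inl ⟨hH.reachable.trans h1, h2⟩)
        · exact Or.inr (Or.inr ⟨hH.reachable.trans h1, h2⟩)
      · rw [fromEdgeSet_adj, Set.mem_singleton_iff] at hE
        rcases Sym2.eq_iff.mp hE.1 with ⟨rfl, rfl⟩ | ⟨rfl, rfl⟩
        · rcases ih with h | ⟨h1, h2⟩ | ⟨h1, h2⟩
          · exact Or.inr (Or.inl ⟨Reachable.refl _, h⟩)
          · exact Or.inr (Or.inl ⟨Reachable.refl _, h2⟩)
          · exact Or.inl h2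
        · rcases ih with h | ⟨h1, h2⟩ | ⟨h1, h2⟩
          · exact Or.inr (Or.inr ⟨Reachable.refl _, h⟩)
          · exact Or.inl h2
          · exact Or.inl (h1.symm.trans h2)
  · have hadj : (H ⊔ fromEdgeSet {s(x,y)}).Adj x y :=
      (sup_adj _ _ _ _).mpr (Or.inr ((fromEdgeSet_adj _).mpr ⟨rfl, hxy⟩))
    have hle : H ≤ H ⊔ fromEdgeSet {s(x,y)} := le_sup_left
    rintro (h | ⟨h1, h2⟩ | ⟨h1, h2⟩)
    · exact h.mono hle
    · exact ((h1.mono hle).trans hadj.reachable).trans (h2.mono hle)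
    · exact ((h1.mono hle).trans hadj.reachable.symm).trans (h2.mono hle)

lemma del_decomp {T : SimpleGraph V} {s : Set (Sym2 V)} {e : Sym2 V} (he : e ∈ T.edgeSet)
    (hes : e ∉ s) : T.deleteEdges s = (T.deleteEdges (insert e s)) ⊔ fromEdgeSet {e} := by
  rw [← edgeSet_inj, edgeSet_sup, edgeSet_deleteEdges, edgeSet_deleteEdges, edgeSet_fromEdgeSet]
  have hd : ¬ e.IsDiag := T.not_isDiag_of_mem_edgeSet he
  ext h
  simp only [Set.mem_union, Set.mem_diff, Set.mem_insert_iff, Set.mem_singleton_iff,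
    Set.mem_setOf_eq]
  constructor
  · rintro ⟨h1, h2⟩
    by_cases hhe : h = e
    · exact Or.inr ⟨hhe, hhe ▸ hd⟩
    · exact Or.inl ⟨h1, by tauto⟩
  · rintro (⟨h1, h2⟩ | ⟨rfl, _⟩)
    · exact ⟨h1, by tauto⟩
    · exact ⟨he, hes⟩

lemma tree_not_reach {T : SimpleGraph V} (hT : T.IsTree) {u v : V} (h : T.Adj u v) :
    ¬(T.deleteEdges {s(u,v)}).Reachable u v :=
  (isBridge_iff.mp ((isAcyclic_iff_forall_adj_isBridge.mp hT.2) h))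

lemma reach_del_union {T : SimpleGraph V} (hT : T.IsTree) {u v : V} {s t : Set (Sym2 V)}
    (hs : (T.deleteEdges s).Reachable u v) (ht : (T.deleteEdges t).Reachable u v) :
    (T.deleteEdges (s ∪ t)).Reachable u v := by
  classical
  obtain ⟨w1⟩ := hs
  obtain ⟨w2⟩ := ht
  have hsub1 : ∀ h' ∈ ((w1.toPath : (T.deleteEdges s).Walk u v)).edges,
      h' ∈ T.edgeSet ∧ h' ∉ s := by
    intro h' hh'
    have := (w1.toPath : (T.deleteEdges s).Walk u v).edges_subset_edgeSet hh'
    rw [edgeSet_deleteEdges] at this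
    exact this
  have hsub2 : ∀ h' ∈ ((w2.toPath : (T.deleteEdges t).Walk u v)).edges,
      h' ∈ T.edgeSet ∧ h' ∉ t := by
    intro h' hh'
    have := (w2.toPath : (T.deleteEdges t).Walk u v).edges_subset_edgeSet hh'
    rw [edgeSet_deleteEdges] at this
    exact this
  set p1 : T.Walk u v :=
    ((w1.toPath : (T.deleteEdges s).Walk u v)).transfer T (fun h' hh' => (hsub1 h' hh').1)
    with hp1def
  set p2 : T.Walk u v :=
    ((w2.toPath : (T.deleteEdges t).Walk u v)).transfer T (fun h' hh' => (hsub2 h' hh').1)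
    with hp2def
  have hp1 : p1.IsPath := (w1.toPath.2).transfer _
  have hp2 : p2.IsPath := (w2.toPath.2).transfer _
  have heq : p1 = p2 := by
    have h1 := (hT.existsUnique_path u v).unique hp1 hp2
    exact h1
  apply reach_of_walk_avoid p1
  intro h' hh'
  rw [Set.mem_union]
  push_neg
  constructor
  · rw [hp1def, Walk.edges_transfer] at hh'
    exact (hsub1 h' hh').2
  · rw [heq, hp2def, Walk.edges_transfer] at hh'
    exact (hsub2 h' hh').2

lemma exists_cross_edge {K : SimpleGraph V} {R : V → V → Prop}
    (hrefl : ∀ z : V, R z z)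
    (htrans : ∀ {p q r : V}, R p q → R q r → R p r) :
    ∀ {x y : V}, (q : K.Walk x y) → ¬R x y →
      ∃ u' v', s(u', v') ∈ q.edges ∧ ¬R u' v' := by
  intro x y q
  induction q with
  | nil => intro h; exact absurd (hrefl _) h
  | @cons a c d hadj p ih =>
    intro h
    by_cases hac : R a c
    · have hcd : ¬R c d := fun hcd => h (htrans hac hcd)
      obtain ⟨u', v', hm, hr⟩ := ih hcd
      exact ⟨u', v', by rw [Walk.edges_cons]; exact List.mem_cons_of_mem _ hm, hr⟩
    · exact ⟨a, c, by rw [Walk.edges_cons]; exact List.mem_cons_self, hac⟩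

lemma twoclass_aux {α : Type*} {R : α → α → Prop}
    (hsymm : ∀ {p q : α}, R p q → R q p)
    (htrans : ∀ {p q r : α}, R p q → R q r → R p r) {a b x y : α}
    (htot : ∀ z, R z a ∨ R z b) (hxy : ¬ R x y) (z : α) : R z x ∨ R z y := by
  rcases htot x with hx | hx <;> rcases htot y with hy | hy <;> rcases htot z with hz | hz
  · exact absurd (htrans hx (hsymm hy)) hxy
  · exact absurd (htrans hx (hsymm hy)) hxy
  · exact Or.inl (htrans hz (hsymm hx))
  · exact Or.inr (htrans hz (hsymm hy))
  · exact Or.inr (htrans hz (hsymm hy))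
  · exact Or.inl (htrans hz (hsymm hx))
  · exact absurd (htrans hy (hsymm hx)) (fun hh => hxy (hsymm hh))
  · exact absurd (htrans hy (hsymm hx)) (fun hh => hxy (hsymm hh))

lemma fromEdgeSet_singleton_edgeSet {f : Sym2 V} (h : ¬f.IsDiag) :
    (fromEdgeSet {f}).edgeSet = {f} := by
  rw [edgeSet_fromEdgeSet]
  ext h'
  simp only [Set.mem_diff, Set.mem_singleton_iff, Set.mem_setOf_eq]
  constructor
  · rintro ⟨h1, _⟩; exact h1
  · rintro rfl; exact ⟨rfl, h⟩

lemma tree_color {T : SimpleGraph V} (hT : T.IsTree) {a b : V} (h : T.Adj a b) (z : V) :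
    (T.deleteEdges {s(a,b)}).Reachable z a ∨ (T.deleteEdges {s(a,b)}).Reachable z b := by
  have hfull : T = T.deleteEdges {s(a,b)} ⊔ fromEdgeSet {s(a,b)} := by
    have := del_decomp (s := (∅ : Set (Sym2 V))) (T.mem_edgeSet.mpr h) (Set.notMem_empty _)
    simpa using this
  have hr : T.Reachable z a := hT.isConnected.preconnected z a
  rw [hfull] at hr
  rcases (reach_sup_edge_iff h.ne _ _).mp hr with h1 | ⟨h1, h2⟩ | ⟨h1, h2⟩
  · exact Or.inl h1
  · exact Or.inl h1
  · exact Or.inr h1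

lemma mem_cutset_iff {G T : SimpleGraph V} {e : Sym2 V} {u v : V} :
    s(u,v) ∈ cutset G T e ↔ s(u,v) ∈ G.edgeSet ∧ ¬(T.deleteEdges {e}).Reachable u v := by
  constructor
  · rintro ⟨h1, h2⟩; exact ⟨h1, h2 u v rfl⟩
  · rintro ⟨h1, h2⟩
    refine ⟨h1, ?_⟩
    intro p' q' hpq
    rcases Sym2.eq_iff.mp hpq with ⟨rfl, rfl⟩ | ⟨rfl, rfl⟩
    · exact h2
    · exact fun r => h2 r.symm

lemma sym2_rep (h : Sym2 V) : ∃ u v, h = s(u,v) :=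
  Sym2.inductionOn h fun u v => ⟨u, v, rfl⟩

lemma activity_iff [LinearOrder (Sym2 V)] {G T T' : SimpleGraph V} {a b x y : V}
    (hTtree : T.IsTree) (hTle : T ≤ G)
    (heT : s(a,b) ∈ T.edgeSet) (hfG : s(x,y) ∈ G.edgeSet)
    (hfnT : s(x,y) ∉ T.edgeSet) (hfe : s(x,y) ≠ s(a,b))
    (hRxy : ¬(T.deleteEdges {s(a,b)}).Reachable x y)
    (hfmin : ∀ h ∈ cutset G T s(a,b), s(x,y) ≤ h)
    (hemin : ∀ h ∈ IN G T, s(a,b) ≤ h)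
    (hT'E : T'.edgeSet = (T.edgeSet \ {s(a,b)}) ∪ {s(x,y)})
    {p q : V} (hgT : s(p,q) ∈ T.edgeSet) (hge : s(p,q) ≠ s(a,b)) :
    InternallyActive G T s(p,q) ↔ InternallyActive G T' s(p,q) := by
  have hadjT : T.Adj a b := T.mem_edgeSet.mp heT
  have hadjTg : T.Adj p q := T.mem_edgeSet.mp hgT
  have hab : a ≠ b := hadjT.ne
  have hpq : p ≠ q := hadjTg.ne
  have hxy : x ≠ y := (G.mem_edgeSet.mp hfG).ne
  have hgf : s(p,q) ≠ s(x,y) := fun hh => hfnT (hh ▸ hgT)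
  have heG : s(a,b) ∈ G.edgeSet := edgeSet_subset_edgeSet.mpr hTle heT
  have hgG : s(p,q) ∈ G.edgeSet := edgeSet_subset_edgeSet.mpr hTle hgT
  have hfd : ¬(s(x,y) : Sym2 V).IsDiag := G.not_isDiag_of_mem_edgeSet hfG
  -- basic reachability atoms
  have hR1ab : ¬(T.deleteEdges {s(a,b)}).Reachable a b := tree_not_reach hTtree hadjT
  have hR2pq : ¬(T.deleteEdges {s(p,q)}).Reachable p q := tree_not_reach hTtree hadjTg
  have hR1pq : (T.deleteEdges {s(a,b)}).Reachable p q :=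
    (Adj.reachable (by rw [deleteEdges_adj]; exact ⟨hadjTg, by simpa using hge⟩))
  have hR2ab : (T.deleteEdges {s(p,q)}).Reachable a b :=
    (Adj.reachable (by rw [deleteEdges_adj]; exact ⟨hadjT, by simpa using (Ne.symm hge)⟩))
  -- decomposition of T - g
  have hdec : T.deleteEdges {s(p,q)} =
      (T.deleteEdges {s(a,b), s(p,q)}) ⊔ fromEdgeSet {s(a,b)} :=
    del_decomp heT (by simpa using hge.symm)
  have hsub1 : ({s(a,b)} : Set (Sym2 V)) ⊆ {s(a,b), s(p,q)} := by
    intro z hz; exact Or.inl hz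
  have hsub2 : ({s(p,q)} : Set (Sym2 V)) ⊆ {s(a,b), s(p,q)} := by
    intro z hz; exact Or.inr hz
  have hFiff : ∀ u v : V, (T.deleteEdges {s(a,b), s(p,q)}).Reachable u v ↔
      (T.deleteEdges {s(a,b)}).Reachable u v ∧ (T.deleteEdges {s(p,q)}).Reachable u v := by
    intro u v
    constructor
    · intro h; exact ⟨reach_del_mono hsub1 h, reach_del_mono hsub2 h⟩
    · rintro ⟨h1, h2⟩
      have := reach_del_union hTtree h1 h2
      rwa [Set.singleton_union] at this
  have color1 : ∀ z, (T.deleteEdges {s(a,b)}).Reachable z a ∨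
      (T.deleteEdges {s(a,b)}).Reachable z b := tree_color hTtree hadjT
  have CP1 : ∀ u v : V, ¬(T.deleteEdges {s(a,b)}).Reachable u v →
      (T.deleteEdges {s(p,q)}).Reachable u v →
      (T.deleteEdges {s(p,q)}).Reachable u a ∧ (T.deleteEdges {s(p,q)}).Reachable u b := by
    intro u v h1 h2
    rw [hdec] at h2
    rcases (reach_sup_edge_iff hab u v).mp h2 with h | ⟨ha1, _⟩ | ⟨hb1, _⟩
    · exact absurd (reach_del_mono hsub1 h) h1
    · have hua := reach_del_mono hsub2 ha1
      exact ⟨hua, hua.trans hR2ab⟩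
    · have hub := reach_del_mono hsub2 hb1
      exact ⟨hub.trans hR2ab.symm, hub⟩
  -- T' - g decomposition
  have hT'del : T'.deleteEdges {s(p,q)} =
      (T.deleteEdges {s(a,b), s(p,q)}) ⊔ fromEdgeSet {s(x,y)} := by
    rw [← edgeSet_inj, edgeSet_sup, edgeSet_deleteEdges, edgeSet_deleteEdges,
      fromEdgeSet_singleton_edgeSet hfd, hT'E]
    ext h
    simp only [Set.mem_union, Set.mem_diff, Set.mem_singleton_iff, Set.mem_insert_iff]
    constructor
    · rintro ⟨⟨hT1, hT2⟩ | rfl, h3⟩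
      · exact Or.inl ⟨hT1, by tauto⟩
      · exact Or.inr rfl
    · rintro (⟨hT1, hT2⟩ | rfl)
      · exact ⟨Or.inl ⟨hT1, fun hh => hT2 (Or.inl hh)⟩, fun hh => hT2 (Or.inr hh)⟩
      · exact ⟨Or.inr rfl, Ne.symm hgf⟩
  have hT'reach : ∀ u v : V, (T'.deleteEdges {s(p,q)}).Reachable u v ↔
      ((T.deleteEdges {s(a,b), s(p,q)}).Reachable u v ∨
      ((T.deleteEdges {s(a,b), s(p,q)}).Reachable u x ∧
        (T.deleteEdges {s(a,b), s(p,q)}).Reachable y v) ∨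
      ((T.deleteEdges {s(a,b), s(p,q)}).Reachable u y ∧
        (T.deleteEdges {s(a,b), s(p,q)}).Reachable x v)) := by
    intro u v
    rw [hT'del]
    exact reach_sup_edge_iff hxy u v
  have hgT' : s(p,q) ∈ T'.edgeSet := by
    rw [hT'E]; exact Or.inl ⟨hgT, by simpa using hge⟩
  -- g in both cutsets
  have hgcutT : s(p,q) ∈ cutset G T s(p,q) := mem_cutset_iff.mpr ⟨hgG, hR2pq⟩
  have hgcutT' : s(p,q) ∈ cutset G T' s(p,q) := by
    refine mem_cutset_iff.mpr ⟨hgG, ?_⟩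
    rw [hT'reach]
    rintro (h | ⟨h1, h2⟩ | ⟨h1, h2⟩)
    · exact hR2pq (reach_del_mono hsub2 h)
    · exact hRxy (((reach_del_mono hsub1 h1).symm.trans hR1pq).trans
        (reach_del_mono hsub1 h2).symm)
    · exact hRxy ((reach_del_mono hsub1 h2).trans (hR1pq.symm.trans
        (reach_del_mono hsub1 h1)))
  by_cases hcr : (T.deleteEdges {s(p,q)}).Reachable x y
  · -- f does not cross the g-cut : cutsets are equal
    have hRiff : ∀ u v : V, (T'.deleteEdges {s(p,q)}).Reachable u v ↔
        (T.deleteEdges {s(p,q)}).Reachable u v := by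
      intro u v
      rw [hT'reach]
      constructor
      · rintro (h | ⟨h1, h2⟩ | ⟨h1, h2⟩)
        · exact reach_del_mono hsub2 h
        · exact ((reach_del_mono hsub2 h1).trans hcr).trans (reach_del_mono hsub2 h2)
        · exact ((reach_del_mono hsub2 h1).trans hcr.symm).trans (reach_del_mono hsub2 h2)
      · intro h2uv
        by_cases h1uv : (T.deleteEdges {s(a,b)}).Reachable u v
        · exact Or.inl ((hFiff u v).mpr ⟨h1uv, h2uv⟩)
        · have hu := CP1 u v h1uv h2uv
          have hv := CP1 v u (fun hh => h1uv hh.symm) h2uv.symm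
          have hx' := CP1 x y hRxy hcr
          have hR2ux : (T.deleteEdges {s(p,q)}).Reachable u x := hu.1.trans hx'.1.symm
          have hR2vx : (T.deleteEdges {s(p,q)}).Reachable v x := hv.1.trans hx'.1.symm
          have hR2uy : (T.deleteEdges {s(p,q)}).Reachable u y := hR2ux.trans hcr
          have hR2vy : (T.deleteEdges {s(p,q)}).Reachable v y := hR2vx.trans hcr
          have htc := twoclass_aux (R := (T.deleteEdges {s(a,b)}).Reachable)
            (fun h => h.symm) (fun h1 h2 => h1.trans h2) color1 hRxy
          rcases htc u with h1ux | h1uy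
          · have h1vy : (T.deleteEdges {s(a,b)}).Reachable v y := by
              rcases htc v with h1vx | h1vy
              · exact absurd (h1ux.trans h1vx.symm) h1uv
              · exact h1vy
            exact Or.inr (Or.inl ⟨(hFiff u x).mpr ⟨h1ux, hR2ux⟩,
              (hFiff y v).mpr ⟨h1vy.symm, hR2vy.symm⟩⟩)
          · have h1vx : (T.deleteEdges {s(a,b)}).Reachable v x := by
              rcases htc v with h1vx | h1vy
              · exact h1vx
              · exact absurd (h1uy.trans h1vy.symm) h1uv
            exact Or.inr (Or.inr ⟨(hFiff u y).mpr ⟨h1uy, hR2uy⟩,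
              (hFiff x v).mpr ⟨h1vx.symm, hR2vx.symm⟩⟩)
    have hsets : cutset G T' s(p,q) = cutset G T s(p,q) := by
      ext h
      obtain ⟨u, v, rfl⟩ := sym2_rep h
      rw [mem_cutset_iff, mem_cutset_iff, hRiff]
    constructor
    · rintro ⟨_, h2⟩
      exact ⟨hgT', by rw [hsets]; exact h2⟩
    · rintro ⟨_, h2⟩
      exact ⟨hgT, by rw [← hsets]; exact h2⟩
  · -- f crosses the g-cut
    have hfcutg : s(x,y) ∈ cutset G T s(p,q) := mem_cutset_iff.mpr ⟨hfG, hcr⟩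
    have hecutg' : s(a,b) ∈ cutset G T' s(p,q) := by
      refine mem_cutset_iff.mpr ⟨heG, ?_⟩
      rw [hT'reach]
      rintro (h | ⟨h1, h2⟩ | ⟨h1, h2⟩)
      · exact hR1ab (reach_del_mono hsub1 h)
      · exact hcr (((reach_del_mono hsub2 h1).symm.trans hR2ab).trans
          (reach_del_mono hsub2 h2).symm)
      · exact hcr ((reach_del_mono hsub2 h2).trans (hR2ab.symm.trans
          (reach_del_mono hsub2 h1)))
    constructor
    · rintro ⟨_, hact⟩
      refine ⟨hgT', ?_⟩
      intro h hmem
      obtain ⟨u, v, rfl⟩ := sym2_rep h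
      rcases mem_cutset_iff.mp hmem with ⟨hG', hnr⟩
      have hnF : ¬(T.deleteEdges {s(a,b), s(p,q)}).Reachable u v :=
        fun hh => hnr ((hT'reach u v).mpr (Or.inl hh))
      by_cases h2uv : (T.deleteEdges {s(p,q)}).Reachable u v
      · have h1uv : ¬(T.deleteEdges {s(a,b)}).Reachable u v :=
          fun hh => hnF ((hFiff u v).mpr ⟨hh, h2uv⟩)
        have : s(u,v) ∈ cutset G T s(a,b) := mem_cutset_iff.mpr ⟨hG', h1uv⟩
        exact le_trans (hact _ hfcutg) (hfmin _ this)
      · exact hact _ (mem_cutset_iff.mpr ⟨hG', h2uv⟩)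
    · rintro ⟨_, hact'⟩
      refine ⟨hgT, ?_⟩
      intro h hmem
      obtain ⟨u, v, rfl⟩ := sym2_rep h
      by_contra hgh
      rcases mem_cutset_iff.mp hmem with ⟨hG', hnr2⟩
      rcases le_or_gt s(x,y) s(u,v) with hfh | hhf
      · have hgIN : s(p,q) ∈ IN G T :=
          ⟨hgT, fun hact => hgh (hact.2 _ hmem)⟩
        have helt : s(a,b) < s(p,q) := lt_of_le_of_ne (hemin _ hgIN) (Ne.symm hge)
        exact absurd (hact' _ hecutg') (not_le.mpr helt)
      · have hR1uv : (T.deleteEdges {s(a,b)}).Reachable u v := by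
          by_contra hcu
          exact absurd (hfmin _ (mem_cutset_iff.mpr ⟨hG', hcu⟩)) (not_le.mpr hhf)
        have hmem' : s(u,v) ∈ cutset G T' s(p,q) := by
          refine mem_cutset_iff.mpr ⟨hG', ?_⟩
          rw [hT'reach]
          rintro (h | ⟨h1, h2⟩ | ⟨h1, h2⟩)
          · exact hnr2 (reach_del_mono hsub2 h)
          · exact hRxy (((reach_del_mono hsub1 h1).symm.trans hR1uv).trans
              (reach_del_mono hsub1 h2).symm)
          · exact hRxy ((reach_del_mono hsub1 h2).trans (hR1uv.symm.trans
              (reach_del_mono hsub1 h1)))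
        exact hgh (hact' _ hmem')

end NBCAux

open NBCAux in
/-- if `T` is an NBC spanning tree with `IN(T) ≠ ∅`, then there is an
edge `e ∈ IN(T)` such that, with `f := min cut(T,e)` and `T'` the spanning tree with edge
set `(E(T) \ {e}) ∪ {f}`, the tree `T'` is NBC with `|IN(T')| = |IN(T)| − 1`; moreover `f`
is internally active in `T'`, `f` is the maximal internally active edge of `T'` lying in
`cyc(T',e)`, and `(E(T') ∪ {e}) \ {f} = E(T)`. -/
theorem min_dead_edge_lemma
    {V : Type*} [Fintype V] [LinearOrder (Sym2 V)] (G : SimpleGraph V)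
    (hconn : G.Connected)
    (T : SimpleGraph V) (hT : IsNBCSpanningTree G T) (hIN : (IN G T).Nonempty) :
    ∃ e ∈ IN G T, ∃ f ∈ cutset G T e, (∀ g ∈ cutset G T e, f ≤ g) ∧
      ∀ T' : SimpleGraph V, T'.edgeSet = (T.edgeSet \ {e}) ∪ {f} →
        IsNBCSpanningTree G T' ∧
        (IN G T').ncard = (IN G T).ncard - 1 ∧
        InternallyActive G T' f ∧
        f ∈ cycset T' e ∧
        (∀ g ∈ cycset T' e, InternallyActive G T' g → g ≤ f) ∧
        (T'.edgeSet ∪ {e}) \ {f} = T.edgeSet := by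

  classical
  obtain ⟨⟨hTle, hTtree⟩, hTnbc⟩ := hT
  obtain ⟨e0, heIN, hemin0⟩ := Set.exists_min_image (IN G T) id (Set.toFinite _) hIN
  obtain ⟨a, b, rfl⟩ := sym2_rep e0
  obtain ⟨heT, heNA⟩ := heIN
  have hemin : ∀ h ∈ IN G T, s(a,b) ≤ h := hemin0
  have hadjT : T.Adj a b := T.mem_edgeSet.mp heT
  have hab : a ≠ b := hadjT.ne
  have heG : s(a,b) ∈ G.edgeSet := edgeSet_subset_edgeSet.mpr hTle heT
  have hecut : s(a,b) ∈ cutset G T s(a,b) :=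
    mem_cutset_iff.mpr ⟨heG, tree_not_reach hTtree hadjT⟩
  obtain ⟨f0, hfcut, hfmin0⟩ :=
    Set.exists_min_image (cutset G T s(a,b)) id (Set.toFinite _) ⟨_, hecut⟩
  obtain ⟨x, y, rfl⟩ := sym2_rep f0
  have hfmin : ∀ h ∈ cutset G T s(a,b), s(x,y) ≤ h := hfmin0
  have hfG : s(x,y) ∈ G.edgeSet := hfcut.1
  have hxy : x ≠ y := (G.mem_edgeSet.mp hfG).ne
  have hRxy : ¬(T.deleteEdges {s(a,b)}).Reachable x y := hfcut.2 x y rfl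
  have hflt : s(x,y) < s(a,b) := by
    have hex : ∃ h ∈ cutset G T s(a,b), ¬ s(a,b) ≤ h := by
      by_contra hcon
      push_neg at hcon
      exact heNA ⟨heT, hcon⟩
    obtain ⟨h, hh1, hh2⟩ := hex
    exact lt_of_le_of_lt (hfmin _ hh1) (not_le.mp hh2)
  have hfe : s(x,y) ≠ s(a,b) := ne_of_lt hflt
  have hfnT : s(x,y) ∉ T.edgeSet := by
    intro hfT
    exact hRxy (Adj.reachable (by
      rw [deleteEdges_adj]
      exact ⟨T.mem_edgeSet.mp hfT, by simpa using hfe⟩))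
  have hfd : ¬(s(x,y) : Sym2 V).IsDiag := G.not_isDiag_of_mem_edgeSet hfG
  have hed : ¬(s(a,b) : Sym2 V).IsDiag := G.not_isDiag_of_mem_edgeSet heG
  refine ⟨s(a,b), ⟨heT, heNA⟩, s(x,y), hfcut, hfmin, ?_⟩
  intro T' hT'E
  have hID1 : T'.deleteEdges {s(x,y)} = T.deleteEdges {s(a,b)} := by
    rw [← edgeSet_inj, edgeSet_deleteEdges, edgeSet_deleteEdges, hT'E]
    ext h
    simp only [Set.mem_union, Set.mem_diff, Set.mem_singleton_iff]
    constructor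
    · rintro ⟨⟨h1, h2⟩ | rfl, h3⟩
      · exact ⟨h1, h2⟩
      · exact absurd rfl h3
    · rintro ⟨h1, h2⟩
      exact ⟨Or.inl ⟨h1, h2⟩, fun hh => hfnT (hh ▸ h1)⟩
  have hID4 : T' ⊔ fromEdgeSet {s(a,b)} = T ⊔ fromEdgeSet {s(x,y)} := by
    rw [← edgeSet_inj, edgeSet_sup, edgeSet_sup, fromEdgeSet_singleton_edgeSet hed,
      fromEdgeSet_singleton_edgeSet hfd, hT'E]
    ext h
    simp only [Set.mem_union, Set.mem_diff, Set.mem_singleton_iff]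
    constructor
    · rintro ((⟨h1, _⟩ | rfl) | rfl)
      · exact Or.inl h1
      · exact Or.inr rfl
      · exact Or.inl heT
    · rintro (h1 | rfl)
      · by_cases hh : h = s(a,b)
        · exact Or.inr hh
        · exact Or.inl (Or.inl ⟨h1, hh⟩)
      · exact Or.inl (Or.inr rfl)
  have hID5 : T' = T.deleteEdges {s(a,b)} ⊔ fromEdgeSet {s(x,y)} := by
    rw [← edgeSet_inj, edgeSet_sup, edgeSet_deleteEdges,
      fromEdgeSet_singleton_edgeSet hfd, hT'E]
  have hT'le : T' ≤ G := by
    rw [← edgeSet_subset_edgeSet, hT'E]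
    rintro h (⟨h1, _⟩ | rfl)
    · exact edgeSet_subset_edgeSet.mpr hTle h1
    · exact hfG
  have hfT' : s(x,y) ∈ T'.edgeSet := by rw [hT'E]; exact Or.inr rfl
  have hadjT' : T'.Adj x y := T'.mem_edgeSet.mp hfT'
  have htc := twoclass_aux (R := (T.deleteEdges {s(a,b)}).Reachable)
    (fun h => h.symm) (fun h1 h2 => h1.trans h2) (tree_color hTtree hadjT) hRxy
  have hT'reachx : ∀ z, T'.Reachable z x := by
    intro z
    rcases htc z with h | h
    · rw [hID5]; exact h.mono le_sup_left
    · have hzy : T'.Reachable z y := by rw [hID5]; exact h.mono le_sup_left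
      exact hzy.trans hadjT'.reachable.symm
  have hT'conn : T'.Connected := by
    rw [connected_iff]
    exact ⟨fun u v => (hT'reachx u).trans (hT'reachx v).symm, hconn.nonempty⟩
  have hT'acyc : T'.IsAcyclic := by
    rw [isAcyclic_iff_forall_adj_isBridge]
    intro u v hadj
    rw [isBridge_iff]
    have hm : s(u,v) ∈ T'.edgeSet := T'.mem_edgeSet.mpr hadj
    rw [hT'E] at hm
    show ¬(T'.deleteEdges {s(u,v)}).Reachable u v
    rcases hm with ⟨hmT, hme⟩ | hmf
    · have hmne : s(u,v) ≠ s(x,y) := fun hh => hfnT (hh ▸ hmT)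
      have hme' : s(u,v) ≠ s(a,b) := by simpa using hme
      have hdel : T'.deleteEdges {s(u,v)} =
          (T.deleteEdges {s(a,b), s(u,v)}) ⊔ fromEdgeSet {s(x,y)} := by
        rw [← edgeSet_inj, edgeSet_sup, edgeSet_deleteEdges, edgeSet_deleteEdges,
          fromEdgeSet_singleton_edgeSet hfd, hT'E]
        ext h
        simp only [Set.mem_union, Set.mem_diff, Set.mem_singleton_iff, Set.mem_insert_iff]
        constructor
        · rintro ⟨⟨h1, h2⟩ | rfl, h3⟩
          · exact Or.inl ⟨h1, by tauto⟩
          · exact Or.inr rfl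
        · rintro (⟨h1, h2⟩ | rfl)
          · exact ⟨Or.inl ⟨h1, fun hh => h2 (Or.inl hh)⟩, fun hh => h2 (Or.inr hh)⟩
          · exact ⟨Or.inr rfl, Ne.symm hmne⟩
      rw [hdel]
      intro hr
      have hsub1 : ({s(a,b)} : Set (Sym2 V)) ⊆ {s(a,b), s(u,v)} := fun z hz => Or.inl hz
      have hsub2 : ({s(u,v)} : Set (Sym2 V)) ⊆ {s(a,b), s(u,v)} := fun z hz => Or.inr hz
      have hR1uv : (T.deleteEdges {s(a,b)}).Reachable u v :=
        Adj.reachable (by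
          rw [deleteEdges_adj]
          exact ⟨T.mem_edgeSet.mp hmT, by simpa using hme'⟩)
      rcases (reach_sup_edge_iff hxy u v).mp hr with h | ⟨h1, h2⟩ | ⟨h1, h2⟩
      · exact tree_not_reach hTtree (T.mem_edgeSet.mp hmT) (reach_del_mono hsub2 h)
      · exact hRxy (((reach_del_mono hsub1 h1).symm.trans hR1uv).trans
          (reach_del_mono hsub1 h2).symm)
      · exact hRxy ((reach_del_mono hsub1 h2).trans (hR1uv.symm.trans
          (reach_del_mono hsub1 h1)))
    · have heq : s(u,v) = s(x,y) := hmf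
      have hgr : T'.deleteEdges {s(u,v)} = T.deleteEdges {s(a,b)} := by rw [heq, hID1]
      rw [hgr]
      rcases Sym2.eq_iff.mp heq with ⟨rfl, rfl⟩ | ⟨rfl, rfl⟩
      · exact hRxy
      · exact fun hr => hRxy hr.symm
  have hT'tree : T'.IsTree := ⟨hT'conn, hT'acyc⟩
  have hT'nbc : IsNBC G T'.edgeSet := by
    rintro B ⟨C, c, ⟨v0, w, hwcyc, hCw⟩, hcC, hcmin, hBdef⟩ hBsub
    by_cases hfC : s(x,y) ∈ C
    · by_cases hcf : c = s(x,y)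
      · refine hTnbc B ⟨C, c, ⟨v0, w, hwcyc, hCw⟩, hcC, hcmin, hBdef⟩ ?_
        intro h hB
        have hT'm := hBsub hB
        rw [hT'E] at hT'm
        rcases hT'm with ⟨h1, _⟩ | hf
        · exact h1
        · exfalso
          rw [hBdef] at hB
          exact hB.2 (by
            rw [Set.mem_singleton_iff]
            exact (Set.mem_singleton_iff.mp hf).trans hcf.symm)
      · have hclt : c < s(x,y) := lt_of_le_of_ne (hcmin _ hfC) hcf
        have hfw : s(x,y) ∈ w.edges := by rw [hCw] at hfC; exact hfC
        have hHe : ∀ h' ∈ w.edges,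
            h' ∈ (fromEdgeSet {h | h ∈ w.edges} : SimpleGraph V).edgeSet := by
          intro h' hh'
          rw [edgeSet_fromEdgeSet]
          exact ⟨hh', G.not_isDiag_of_mem_edgeSet (w.edges_subset_edgeSet hh')⟩
        have hw'cyc : (w.transfer _ hHe).IsCycle := hwcyc.transfer hHe
        have hreach := (adj_and_reachable_delete_edges_iff_exists_cycle.mpr
          ⟨v0, w.transfer _ hHe, hw'cyc, by rw [Walk.edges_transfer]; exact hfw⟩).2
        obtain ⟨qw⟩ := hreach
        obtain ⟨u', v', hqmem, hcross⟩ := exists_cross_edge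
          (R := fun u v => (T.deleteEdges {s(a,b)}).Reachable u v)
          (fun z => Reachable.refl z) (fun h1 h2 => h1.trans h2) qw hRxy
        have hq_edge := qw.edges_subset_edgeSet hqmem
        rw [edgeSet_deleteEdges, edgeSet_fromEdgeSet] at hq_edge
        obtain ⟨⟨hqw, _⟩, hqnf⟩ := hq_edge
        have h'G : s(u',v') ∈ G.edgeSet := w.edges_subset_edgeSet hqw
        have h'cut : s(u',v') ∈ cutset G T s(a,b) := mem_cutset_iff.mpr ⟨h'G, hcross⟩
        have h'ge : s(x,y) ≤ s(u',v') := hfmin _ h'cut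
        have h'C : s(u',v') ∈ C := by rw [hCw]; exact hqw
        have h'B : s(u',v') ∈ B := by
          rw [hBdef]
          refine ⟨h'C, ?_⟩
          rw [Set.mem_singleton_iff]
          intro hh
          exact absurd (hh ▸ h'ge) (not_le.mpr hclt)
        have hmem' := hBsub h'B
        rw [hT'E] at hmem'
        rcases hmem' with ⟨h1, h2⟩ | hf
        · refine hcross (Adj.reachable ?_)
          rw [deleteEdges_adj]
          exact ⟨T.mem_edgeSet.mp h1, by simpa using h2⟩
        · exact hqnf (Set.mem_singleton_iff.mp hf)
    · refine hTnbc B ⟨C, c, ⟨v0, w, hwcyc, hCw⟩, hcC, hcmin, hBdef⟩ ?_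
      intro h hB
      have hT'm := hBsub hB
      rw [hT'E] at hT'm
      rcases hT'm with ⟨h1, _⟩ | hf
      · exact h1
      · exfalso
        rw [hBdef] at hB
        exact hfC ((Set.mem_singleton_iff.mp hf) ▸ hB.1)
  have hcuts : cutset G T' s(x,y) = cutset G T s(a,b) := by
    unfold cutset
    rw [hID1]
  have hactf : InternallyActive G T' s(x,y) := ⟨hfT', by rw [hcuts]; exact hfmin⟩
  have hINeq : IN G T' = IN G T \ {s(a,b)} := by
    ext h
    simp only [IN, Set.mem_setOf_eq, Set.mem_diff, Set.mem_singleton_iff]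
    constructor
    · rintro ⟨hh1, hh2⟩
      rw [hT'E] at hh1
      rcases hh1 with ⟨hhT, hhe⟩ | hhf
      · have hne : h ≠ s(a,b) := by simpa using hhe
        obtain ⟨p, q, rfl⟩ := sym2_rep h
        exact ⟨⟨hhT, fun hact => hh2 ((activity_iff hTtree hTle heT hfG hfnT hfe hRxy
          hfmin hemin hT'E hhT hne).mp hact)⟩, hne⟩
      · exact absurd hactf (by rw [← Set.mem_singleton_iff.mp hhf]; exact hh2)
    · rintro ⟨⟨hhT, hh2⟩, hne⟩
      obtain ⟨p, q, rfl⟩ := sym2_rep h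
      refine ⟨by rw [hT'E]; exact Or.inl ⟨hhT, by simpa using hne⟩,
        fun hact' => hh2 ((activity_iff hTtree hTle heT hfG hfnT hfe hRxy
          hfmin hemin hT'E hhT hne).mpr hact')⟩
  have hncard : (IN G T').ncard = (IN G T).ncard - 1 := by
    rw [hINeq]
    exact Set.ncard_diff_singleton_of_mem ⟨heT, heNA⟩
  have hKE : (T ⊔ fromEdgeSet {s(x,y)}).edgeSet = T.edgeSet ∪ {s(x,y)} := by
    rw [edgeSet_sup, fromEdgeSet_singleton_edgeSet hfd]
  have hcyceq : cycset T' s(a,b) = cycset T s(x,y) := by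
    unfold cycset
    rw [hID4]
  have hKf : (T ⊔ fromEdgeSet {s(x,y)}).deleteEdges {s(x,y)} = T := by
    rw [← edgeSet_inj, edgeSet_deleteEdges, hKE]
    ext h
    simp only [Set.mem_diff, Set.mem_union, Set.mem_singleton_iff]
    constructor
    · rintro ⟨h1 | rfl, h2⟩
      · exact h1
      · exact absurd rfl h2
    · intro h1
      exact ⟨Or.inl h1, fun hh => hfnT (hh ▸ h1)⟩
  have hfcyc : s(x,y) ∈ cycset T' s(a,b) := by
    rw [hcyceq]
    exact ⟨by rw [hKE]; exact Or.inr rfl, by rw [hKf]; exact hTtree.isConnected⟩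
  have hmaxcyc : ∀ g ∈ cycset T' s(a,b), InternallyActive G T' g → g ≤ s(x,y) := by
    intro g hgcyc hact'
    rw [hcyceq] at hgcyc
    obtain ⟨hgK, hgconn⟩ := hgcyc
    by_cases hgfeq : g = s(x,y)
    · exact le_of_eq hgfeq
    · have hgT : g ∈ T.edgeSet := by
        rw [hKE] at hgK
        rcases hgK with h1 | h1
        · exact h1
        · exact absurd (Set.mem_singleton_iff.mp h1) hgfeq
      have hge : g ≠ s(a,b) := by
        have hmm := hact'.1
        rw [hT'E] at hmm
        rcases hmm with ⟨_, h2⟩ | h1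
        · simpa using h2
        · exact absurd (Set.mem_singleton_iff.mp h1) hgfeq
      obtain ⟨p, q, rfl⟩ := sym2_rep g
      have hadjg : T.Adj p q := T.mem_edgeSet.mp hgT
      have hKg : (T ⊔ fromEdgeSet {s(x,y)}).deleteEdges {s(p,q)} =
          T.deleteEdges {s(p,q)} ⊔ fromEdgeSet {s(x,y)} := by
        rw [← edgeSet_inj, edgeSet_deleteEdges, edgeSet_sup, edgeSet_sup, edgeSet_deleteEdges,
          fromEdgeSet_singleton_edgeSet hfd]
        ext h
        simp only [Set.mem_diff, Set.mem_union, Set.mem_singleton_iff]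
        constructor
        · rintro ⟨h1 | rfl, h2⟩
          · exact Or.inl ⟨h1, h2⟩
          · exact Or.inr rfl
        · rintro (⟨h1, h2⟩ | rfl)
          · exact ⟨Or.inl h1, h2⟩
          · exact ⟨Or.inr rfl, Ne.symm hgfeq⟩
      have hRxyg : ¬(T.deleteEdges {s(p,q)}).Reachable x y := by
        intro hr
        have hpre := hgconn.preconnected p q
        rw [hKg] at hpre
        rcases (reach_sup_edge_iff hxy p q).mp hpre with h | ⟨h1, h2⟩ | ⟨h1, h2⟩
        · exact tree_not_reach hTtree hadjg h
        · exact tree_not_reach hTtree hadjg (h1.trans (hr.trans h2))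
        · exact tree_not_reach hTtree hadjg (h1.trans (hr.symm.trans h2))
      have hfcutg : s(x,y) ∈ cutset G T s(p,q) := mem_cutset_iff.mpr ⟨hfG, hRxyg⟩
      have hactT : InternallyActive G T s(p,q) :=
        (activity_iff hTtree hTle heT hfG hfnT hfe hRxy hfmin hemin hT'E hgT hge).mpr hact'
      exact hactT.2 _ hfcutg
  have hfinal : (T'.edgeSet ∪ {s(a,b)}) \ {s(x,y)} = T.edgeSet := by
    rw [hT'E]
    ext h
    simp only [Set.mem_diff, Set.mem_union, Set.mem_singleton_iff]
    constructor
    · rintro ⟨(⟨h1, _⟩ | rfl) | rfl, h2⟩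
      · exact h1
      · exact absurd rfl h2
      · exact heT
    · intro h1
      by_cases hh : h = s(a,b)
      · exact ⟨Or.inr hh, fun hh2 => hfe (hh2 ▸ hh)⟩
      · exact ⟨Or.inl (Or.inl ⟨h1, hh⟩), fun hh2 => hfnT (hh2 ▸ h1)⟩
  exact ⟨⟨⟨hT'le, hT'tree⟩, hT'nbc⟩, hncard, hactf, hfcyc, hmaxcyc, hfinal⟩
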